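/- Let f : ℍ → ℍ be continuously real-differentiable on an open set U ⊆ ℍ, and let q₀, q₁ ∈ U be such that the segment joining q₀ and q₁ is contained in U. Set λ := q₁ − q₀. Then f(q₁) − f(q₀) = ∫₀¹ Σ_{η ∈ {1,i,j,k}} (∂f/∂q^η)(q₀ + t λ) · (η λ η⁻¹) dt, and also f(q₁) − f(q₀) = ∫₀¹ Σ_{η ∈ {1,i,j,k}} (∂f/∂q^{η*})(q₀ + t λ) · (η λ η⁻¹)* dt. -/

import Mathlib

open Quaternion Filter Topology Asymptotics

noncomputable section

/-- The imaginary unit `i` of the real quaternions. -/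
def qI : ℍ[ℝ] := ⟨0, 1, 0, 0⟩
/-- The imaginary unit `j` of the real quaternions. -/
def qJ : ℍ[ℝ] := ⟨0, 0, 1, 0⟩
/-- The imaginary unit `k` of the real quaternions. -/
def qK : ℍ[ℝ] := ⟨0, 0, 0, 1⟩

/-- Quaternion rotation `p ↦ μ p μ⁻¹`. -/
def qRot (μ p : ℍ[ℝ]) : ℍ[ℝ] := μ * p * μ⁻¹

/-- The left GHR derivative `∂f/∂q^μ` at `q`. -/
def lD (f : ℍ[ℝ] → ℍ[ℝ]) (μ q : ℍ[ℝ]) : ℍ[ℝ] :=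
  (4 : ℍ[ℝ])⁻¹ * (fderiv ℝ f q 1 - fderiv ℝ f q qI * qRot μ qI
    - fderiv ℝ f q qJ * qRot μ qJ - fderiv ℝ f q qK * qRot μ qK)

/-- The left conjugate GHR derivative `∂f/∂q^{μ*}` at `q`. -/
def lDc (f : ℍ[ℝ] → ℍ[ℝ]) (μ q : ℍ[ℝ]) : ℍ[ℝ] :=
  (4 : ℍ[ℝ])⁻¹ * (fderiv ℝ f q 1 + fderiv ℝ f q qI * qRot μ qI
    + fderiv ℝ f q qJ * qRot μ qJ + fderiv ℝ f q qK * qRot μ qK)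

/-- The right GHR derivative `∂ᵣf/∂q^μ` at `q`. -/
def rD (f : ℍ[ℝ] → ℍ[ℝ]) (μ q : ℍ[ℝ]) : ℍ[ℝ] :=
  (4 : ℍ[ℝ])⁻¹ * (fderiv ℝ f q 1 - qRot μ qI * fderiv ℝ f q qI
    - qRot μ qJ * fderiv ℝ f q qJ - qRot μ qK * fderiv ℝ f q qK)

/-- The right conjugate GHR derivative `∂ᵣf/∂q^{μ*}` at `q`. -/
def rDc (f : ℍ[ℝ] → ℍ[ℝ]) (μ q : ℍ[ℝ]) : ℍ[ℝ] :=
  (4 : ℍ[ℝ])⁻¹ * (fderiv ℝ f q 1 + qRot μ qI * fderiv ℝ f q qI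
    + qRot μ qJ * fderiv ℝ f q qJ + qRot μ qK * fderiv ℝ f q qK)

/-!
Along the segment, the fundamental theorem of calculus gives
`f q₁ - f q₀ = ∫₀¹ Df(q₀ + tλ) λ dt`, so it suffices to show that both sums of GHR derivatives
reconstruct `Df(q) λ` pointwise. Conjugation `p ↦ η p η⁻¹` is a ring automorphism commuting with
`*`, and averaging it over `η ∈ {1, i, j, k}` projects a quaternion onto its real part. Expanding
the products, the coefficient of `Df(q) 1` becomes `Re λ` and that of `Df(q) i` becomes
`-Re(i λ) = λ_i` (resp. `Re(i λ*) = λ_i`), and likewise for `j` and `k`.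
-/

theorem sub_eq_integral_fderiv_of_segment_subset {E F : Type*} [NormedAddCommGroup E]
    [NormedSpace ℝ E] [NormedAddCommGroup F] [NormedSpace ℝ F] [CompleteSpace F]
    {f : E → F} {U : Set E} (hU : IsOpen U) (hf : ContDiffOn ℝ 1 f U) {x y : E}
    (hseg : segment ℝ x y ⊆ U) :
    f y - f x = ∫ t in (0:ℝ)..1, fderiv ℝ f (x + t • (y - x)) (y - x) := by
  have hmem : ∀ t ∈ Set.uIcc (0:ℝ) 1, x + t • (y - x) ∈ U := by
    intro t ht
    rw [Set.uIcc_of_le zero_le_one] at ht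
    exact hseg (by rw [segment_eq_image']; exact ⟨t, ht, rfl⟩)
  have hderiv : ∀ t ∈ Set.uIcc (0:ℝ) 1, HasDerivAt (fun s : ℝ => f (x + s • (y - x)))
      (fderiv ℝ f (x + t • (y - x)) (y - x)) t := by
    intro t ht
    have hline : HasDerivAt (fun s : ℝ => x + s • (y - x)) (y - x) t := by
      simpa using ((hasDerivAt_id t).smul_const (y - x)).const_add x
    exact ((hf.differentiableOn one_ne_zero).differentiableAt
      (hU.mem_nhds (hmem t ht))).hasFDerivAt.comp_hasDerivAt t hline
  have hcont : ContinuousOn (fun t : ℝ => fderiv ℝ f (x + t • (y - x)) (y - x))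
      (Set.uIcc (0:ℝ) 1) :=
    ((hf.continuousOn_fderiv_of_isOpen hU le_rfl).comp (by fun_prop) hmem).clm_apply
      continuousOn_const
  rw [intervalIntegral.integral_eq_sub_of_hasDerivAt hderiv hcont.intervalIntegrable]
  simp

theorem qI_mul_qI : qI * qI = -1 := by
  ext <;> simp only [re_mul, imI_mul, imJ_mul, imK_mul] <;> simp [qI]
theorem qJ_mul_qJ : qJ * qJ = -1 := by
  ext <;> simp only [re_mul, imI_mul, imJ_mul, imK_mul] <;> simp [qJ]
theorem qK_mul_qK : qK * qK = -1 := by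
  ext <;> simp only [re_mul, imI_mul, imJ_mul, imK_mul] <;> simp [qK]

theorem qI_inv : qI⁻¹ = -qI := inv_eq_of_mul_eq_one_right (by rw [mul_neg, qI_mul_qI, neg_neg])
theorem qJ_inv : qJ⁻¹ = -qJ := inv_eq_of_mul_eq_one_right (by rw [mul_neg, qJ_mul_qJ, neg_neg])
theorem qK_inv : qK⁻¹ = -qK := inv_eq_of_mul_eq_one_right (by rw [mul_neg, qK_mul_qK, neg_neg])

theorem qI_ne_zero : qI ≠ 0 := fun h => by simpa [h] using qI_mul_qI
theorem qJ_ne_zero : qJ ≠ 0 := fun h => by simpa [h] using qJ_mul_qJ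
theorem qK_ne_zero : qK ≠ 0 := fun h => by simpa [h] using qK_mul_qK

theorem re_qI_mul (p : ℍ[ℝ]) : (qI * p).re = -p.imI := by simp only [re_mul]; simp [qI]
theorem re_qJ_mul (p : ℍ[ℝ]) : (qJ * p).re = -p.imJ := by simp only [re_mul]; simp [qJ]
theorem re_qK_mul (p : ℍ[ℝ]) : (qK * p).re = -p.imK := by simp only [re_mul]; simp [qK]

theorem inv_four_mul_eq_smul (x : ℍ[ℝ]) : (4 : ℍ[ℝ])⁻¹ * x = (4 : ℝ)⁻¹ • x := by
  rw [← coe_mul_eq_smul, coe_inv]; rfl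

theorem qRot_mul {μ : ℍ[ℝ]} (hμ : μ ≠ 0) (p r : ℍ[ℝ]) :
    qRot μ (p * r) = qRot μ p * qRot μ r := by
  simp only [qRot, mul_assoc, inv_mul_cancel_left₀ hμ]

theorem star_qRot (μ p : ℍ[ℝ]) : star (qRot μ p) = qRot μ (star p) := by
  rcases eq_or_ne μ 0 with rfl | hμ
  · simp [qRot]
  have hn : normSq μ ≠ 0 := normSq_ne_zero.mpr hμ
  have hstar : star μ = normSq μ • μ⁻¹ := by
    rw [← (inv_mul_cancel_left₀ hμ (star μ)), self_mul_star, mul_coe_eq_smul]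
  rw [qRot, star_mul, star_mul, star_inv₀, hstar, smul_inv₀, inv_inv, qRot, smul_mul_assoc,
    mul_smul_comm, mul_smul_comm, smul_smul, inv_mul_cancel₀ hn, one_smul, mul_assoc]

theorem qRot_one_add_qRot_qI_add_qRot_qJ_add_qRot_qK (p : ℍ[ℝ]) :
    qRot 1 p + qRot qI p + qRot qJ p + qRot qK p = ((4 * p.re : ℝ) : ℍ[ℝ]) := by
  simp only [qRot, qI_inv, qJ_inv, qK_inv, inv_one, one_mul, mul_one]
  ext <;> simp only [re_add, imI_add, imJ_add, imK_add, re_mul, imI_mul, imJ_mul, imK_mul,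
    re_neg, imI_neg, imJ_neg, imK_neg] <;> simp [qI, qJ, qK]; ring

theorem map_eq_re_smul_add_imI_smul_add_imJ_smul_add_imK_smul {M F : Type*} [AddCommGroup M]
    [Module ℝ M] [FunLike F ℍ[ℝ] M] [LinearMapClass F ℝ ℍ[ℝ] M] (D : F) (p : ℍ[ℝ]) :
    D p = p.re • D 1 + p.imI • D qI + p.imJ • D qJ + p.imK • D qK := by
  have hp : p = p.re • (1 : ℍ[ℝ]) + p.imI • qI + p.imJ • qJ + p.imK • qK := by
    ext <;> simp only [re_add, imI_add, imJ_add, imK_add, re_smul, imI_smul, imJ_smul, imK_smul] <;>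
      simp [qI, qJ, qK]
  conv_lhs => rw [hp]
  simp only [map_add, map_smul]

theorem sum_lD_mul_qRot (f : ℍ[ℝ] → ℍ[ℝ]) (q l : ℍ[ℝ]) :
    lD f 1 q * qRot 1 l + lD f qI q * qRot qI l + lD f qJ q * qRot qJ l
      + lD f qK q * qRot qK l = fderiv ℝ f q l := by
  set D := fderiv ℝ f q with hD
  have expand : ∀ μ ≠ 0, lD f μ q * qRot μ l = (4 : ℍ[ℝ])⁻¹ * (D 1 * qRot μ l
      - D qI * qRot μ (qI * l) - D qJ * qRot μ (qJ * l) - D qK * qRot μ (qK * l)) := by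
    intro μ hμ
    simp only [lD, ← hD, qRot_mul hμ, mul_assoc, sub_mul]
  rw [expand 1 one_ne_zero, expand qI qI_ne_zero, expand qJ qJ_ne_zero, expand qK qK_ne_zero,
    map_eq_re_smul_add_imI_smul_add_imJ_smul_add_imK_smul D l]
  calc _ = (4 : ℍ[ℝ])⁻¹ * (D 1 * (qRot 1 l + qRot qI l + qRot qJ l + qRot qK l)
      - D qI * (qRot 1 (qI * l) + qRot qI (qI * l) + qRot qJ (qI * l) + qRot qK (qI * l))
      - D qJ * (qRot 1 (qJ * l) + qRot qI (qJ * l) + qRot qJ (qJ * l) + qRot qK (qJ * l))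
      - D qK * (qRot 1 (qK * l) + qRot qI (qK * l) + qRot qJ (qK * l) + qRot qK (qK * l))) := by
        noncomm_ring
    _ = _ := by
      simp only [qRot_one_add_qRot_qI_add_qRot_qJ_add_qRot_qK, re_qI_mul, re_qJ_mul, re_qK_mul,
        mul_coe_eq_smul, inv_four_mul_eq_smul]
      module

theorem sum_lDc_mul_star_qRot (f : ℍ[ℝ] → ℍ[ℝ]) (q l : ℍ[ℝ]) :
    lDc f 1 q * star (qRot 1 l) + lDc f qI q * star (qRot qI l) + lDc f qJ q * star (qRot qJ l)
      + lDc f qK q * star (qRot qK l) = fderiv ℝ f q l := by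
  set D := fderiv ℝ f q with hD
  have expand : ∀ μ ≠ 0, lDc f μ q * star (qRot μ l) = (4 : ℍ[ℝ])⁻¹ * (D 1 * qRot μ (star l)
      + D qI * qRot μ (qI * star l) + D qJ * qRot μ (qJ * star l)
      + D qK * qRot μ (qK * star l)) := by
    intro μ hμ
    simp only [lDc, ← hD, star_qRot, qRot_mul hμ, mul_assoc, add_mul]
  rw [expand 1 one_ne_zero, expand qI qI_ne_zero, expand qJ qJ_ne_zero, expand qK qK_ne_zero,
    map_eq_re_smul_add_imI_smul_add_imJ_smul_add_imK_smul D l]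
  calc _ = (4 : ℍ[ℝ])⁻¹ * (D 1 * (qRot 1 (star l) + qRot qI (star l) + qRot qJ (star l)
        + qRot qK (star l))
      + D qI * (qRot 1 (qI * star l) + qRot qI (qI * star l) + qRot qJ (qI * star l)
        + qRot qK (qI * star l))
      + D qJ * (qRot 1 (qJ * star l) + qRot qI (qJ * star l) + qRot qJ (qJ * star l)
        + qRot qK (qJ * star l))
      + D qK * (qRot 1 (qK * star l) + qRot qI (qK * star l) + qRot qJ (qK * star l)
        + qRot qK (qK * star l))) := by
        noncomm_ring
    _ = _ := by
      simp only [qRot_one_add_qRot_qI_add_qRot_qJ_add_qRot_qK, re_qI_mul, re_qJ_mul, re_qK_mul,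
        re_star, imI_star, imJ_star, imK_star, neg_neg, mul_coe_eq_smul, inv_four_mul_eq_smul]
      module

theorem mean_value_theorem_left_form_general
    (f : ℍ[ℝ] → ℍ[ℝ]) (U : Set ℍ[ℝ]) (hU : IsOpen U)
    (hf : ContDiffOn ℝ 1 f U) (q₀ q₁ : ℍ[ℝ])
    (hseg : segment ℝ q₀ q₁ ⊆ U) :
    (f q₁ - f q₀ = ∫ t in (0:ℝ)..1,
        (lD f 1 (q₀ + t • (q₁ - q₀)) * qRot 1 (q₁ - q₀)
          + lD f qI (q₀ + t • (q₁ - q₀)) * qRot qI (q₁ - q₀)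
          + lD f qJ (q₀ + t • (q₁ - q₀)) * qRot qJ (q₁ - q₀)
          + lD f qK (q₀ + t • (q₁ - q₀)) * qRot qK (q₁ - q₀))) ∧
    (f q₁ - f q₀ = ∫ t in (0:ℝ)..1,
        (lDc f 1 (q₀ + t • (q₁ - q₀)) * star (qRot 1 (q₁ - q₀))
          + lDc f qI (q₀ + t • (q₁ - q₀)) * star (qRot qI (q₁ - q₀))
          + lDc f qJ (q₀ + t • (q₁ - q₀)) * star (qRot qJ (q₁ - q₀))
          + lDc f qK (q₀ + t • (q₁ - q₀)) * star (qRot qK (q₁ - q₀)))) := by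
  rw [sub_eq_integral_fderiv_of_segment_subset hU hf hseg]
  simp only [sum_lD_mul_qRot, sum_lDc_mul_star_qRot, and_self]

theorem mean_value_theorem_left_form
    (f : ℍ[ℝ] → ℍ[ℝ]) (U : Set ℍ[ℝ]) (hU : IsOpen U)
    (hf : ContDiffOn ℝ 1 f U) (q₀ q₁ : ℍ[ℝ]) (hq₀ : q₀ ∈ U) (hq₁ : q₁ ∈ U)
    (hseg : segment ℝ q₀ q₁ ⊆ U) :
    (f q₁ - f q₀ = ∫ t in (0:ℝ)..1,
        (lD f 1 (q₀ + t • (q₁ - q₀)) * qRot 1 (q₁ - q₀)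
          + lD f qI (q₀ + t • (q₁ - q₀)) * qRot qI (q₁ - q₀)
          + lD f qJ (q₀ + t • (q₁ - q₀)) * qRot qJ (q₁ - q₀)
          + lD f qK (q₀ + t • (q₁ - q₀)) * qRot qK (q₁ - q₀))) ∧
    (f q₁ - f q₀ = ∫ t in (0:ℝ)..1,
        (lDc f 1 (q₀ + t • (q₁ - q₀)) * star (qRot 1 (q₁ - q₀))
          + lDc f qI (q₀ + t • (q₁ - q₀)) * star (qRot qI (q₁ - q₀))
          + lDc f qJ (q₀ + t • (q₁ - q₀)) * star (qRot qJ (q₁ - q₀))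
          + lDc f qK (q₀ + t • (q₁ - q₀)) * star (qRot qK (q₁ - q₀)))) :=
  mean_value_theorem_left_form_general f U hU hf q₀ q₁ hseg

end
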